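/- Let σ ∈ VSubst and let x ↦ t be a binding with x ∈ hvars(σ) and vars(t) ⊆ hvars(σ). Suppose that vars(rt(x, σ)) ∩ vars(rt(t, σ)) = ∅ and that rt(x, σ) is linear or rt(t, σ) is linear. Then for every τ ∈ mgs(σ ∪ {x = t}): hvars(σ) ⊆ hvars(τ). -/

import Mathlib

/-!  Common infrastructure: finite and rational trees, substitutions in
rational solved form, the theory RT of rational trees, finiteness /
groundness operators, and Boolean functions over a set of variables of
interest. -/

/-- A signature: a type of function symbols with fixed arities. -/
structure Signature where
  Sym : Type
  arity : Sym → ℕ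

/-- Finite terms over a signature, with variables drawn from `ℕ`. -/
inductive HTerm (Sg : Signature) : Type where
  | var : ℕ → HTerm Sg
  | app : (f : Sg.Sym) → (Fin (Sg.arity f) → HTerm Sg) → HTerm Sg

namespace HTerm

variable {Sg : Signature}

/-- The set of variables occurring in a finite term. -/
def varsIn : HTerm Sg → Set ℕ
  | .var x => {x}
  | .app _ ts => ⋃ i, (ts i).varsIn

/-- Homomorphic application of a variable assignment to a finite term. -/
def substRaw (m : ℕ → HTerm Sg) : HTerm Sg → HTerm Sg
  | .var x => m x
  | .app f ts => .app f (fun i => (ts i).substRaw m)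

/-- The label of the node of a finite term at a given path
(`none` if there is no node at that path). -/
def labelAt : HTerm Sg → List ℕ → Option (Sg.Sym ⊕ ℕ)
  | .var x, [] => some (Sum.inr x)
  | .app f _, [] => some (Sum.inl f)
  | .var _, _ :: _ => none
  | .app f ts, i :: p => if h : i < Sg.arity f then (ts ⟨i, h⟩).labelAt p else none

end HTerm

/-- Substitutions: maps from variables to finite terms that are the identity
on all but finitely many variables. -/
structure Subst (Sg : Signature) where
  map : ℕ → HTerm Sg
  finite : {x : ℕ | map x ≠ HTerm.var x}.Finite

namespace Subst

variable {Sg : Signature}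

/-- The domain of a substitution. -/
def dom (σ : Subst Sg) : Set ℕ := {x | σ.map x ≠ HTerm.var x}

/-- Application of a substitution to a finite term. -/
def apply (σ : Subst Sg) (t : HTerm Sg) : HTerm Sg := t.substRaw σ.map

/-- `σ.iter i t` is `t σ^i`, the `i`-fold application of `σ` to `t`. -/
def iter (σ : Subst Sg) (i : ℕ) (t : HTerm Sg) : HTerm Sg := σ.apply^[i] t

/-- The set of variables occurring in the bindings of `σ`. -/
def varsOf (σ : Subst Sg) : Set ℕ := σ.dom ∪ ⋃ x ∈ σ.dom, (σ.map x).varsIn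

/-- The number of bindings of `σ`. -/
noncomputable def numBindings (σ : Subst Sg) : ℕ := σ.finite.toFinset.card

/-- The set of bindings of `σ`, as pairs (variable, term). -/
def bindings (σ : Subst Sg) : Set (ℕ × HTerm Sg) :=
  {p | p.1 ∈ σ.dom ∧ p.2 = σ.map p.1}

end Subst

/-- A set of bindings forms a circular substitution
`{x₁ ↦ x₂, …, x_{n-1} ↦ x_n, x_n ↦ x₁}` for some `n > 1` and
distinct variables `x₁, …, x_n`. -/
def IsCircularBindingSet {Sg : Signature} (S : Set (ℕ × HTerm Sg)) : Prop :=
  ∃ n : ℕ, 1 < n ∧ ∃ x : ℕ → ℕ,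
    (∀ i j, i < n → j < n → x i = x j → i = j) ∧
    S = {p | ∃ i < n, p = (x i, HTerm.var (x ((i + 1) % n)))}

/-- `σ` is in rational solved form: no subset of its bindings forms a
circular substitution.  `RSubst` is the set of such substitutions. -/
def Subst.InRSF {Sg : Signature} (σ : Subst Sg) : Prop :=
  ∀ S ⊆ σ.bindings, ¬ IsCircularBindingSet S

/-- Variable-idempotent substitutions:
`vars(tσσ) = vars(tσ)` for every finite term `t`. -/
def Subst.IsVSubst {Sg : Signature} (σ : Subst Sg) : Prop :=
  σ.InRSF ∧ ∀ t : HTerm Sg, (σ.apply (σ.apply t)).varsIn = (σ.apply t).varsIn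

/-- The finiteness functions `hvars_n`. -/
def Subst.hvarsN {Sg : Signature} (σ : Subst Sg) : ℕ → Set ℕ
  | 0 => {y | y ∉ σ.dom}
  | n + 1 => σ.hvarsN n ∪ {y | y ∈ σ.dom ∧ (σ.map y).varsIn ⊆ σ.hvarsN n}

/-- The finiteness operator `hvars` (the increasing chain `hvars_n` is
stationary, so its union equals its stationary value). -/
def Subst.hvars {Sg : Signature} (σ : Subst Sg) : Set ℕ := ⋃ n, σ.hvarsN n

/-- The occurrence functions `occ_n`. -/
def Subst.occN {Sg : Signature} (σ : Subst Sg) : ℕ → ℕ → Set ℕ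
  | 0, v => {v} \ σ.dom
  | n + 1, v => {y | ((σ.map y).varsIn ∩ σ.occN n v).Nonempty}

/-- The occurrence operator `occ`. -/
noncomputable def Subst.occ {Sg : Signature} (σ : Subst Sg) (v : ℕ) : Set ℕ :=
  σ.occN σ.numBindings v

/-- The groundness operator `gvars`. -/
noncomputable def Subst.gvars {Sg : Signature} (σ : Subst Sg) : Set ℕ :=
  {y | y ∈ σ.dom ∧ ∀ v ∈ σ.varsOf, y ∉ σ.occ v}

/-! Possibly infinite terms, represented by their labeling functions
(partial maps from finite paths to labels; a label is either a function
symbol or a variable). -/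

/-- The set of variables occurring in a possibly infinite term. -/
def treeVars {Sg : Signature} (u : List ℕ → Option (Sg.Sym ⊕ ℕ)) : Set ℕ :=
  {x | ∃ p, u p = some (Sum.inr x)}

/-- A possibly infinite term is finite (a member of `HTerms`) iff its set of
nodes is finite. -/
def treeFinite {Sg : Signature} (u : List ℕ → Option (Sg.Sym ⊕ ℕ)) : Prop :=
  {p | (u p).isSome}.Finite

/-- A possibly infinite term is linear iff each variable labels at most one
of its leaves. -/
def treeLinear {Sg : Signature} (u : List ℕ → Option (Sg.Sym ⊕ ℕ)) : Prop :=
  ∀ (y : ℕ) (p q : List ℕ),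
    u p = some (Sum.inr y) → u q = some (Sum.inr y) → p = q

/-- A variable `y` occurs linearly in a possibly infinite term iff it labels
exactly one of its leaves. -/
def occursLinearlyIn {Sg : Signature} (y : ℕ)
    (u : List ℕ → Option (Sg.Sym ⊕ ℕ)) : Prop :=
  ∃! p : List ℕ, u p = some (Sum.inr y)

/-- A possibly infinite term is a variable. -/
def treeIsVar {Sg : Signature} (u : List ℕ → Option (Sg.Sym ⊕ ℕ)) : Prop :=
  ∃ y : ℕ, u = (HTerm.var y : HTerm Sg).labelAt

/- `σ.rt t` is the limit of the converging sequence `t σ^i` of finite terms: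
its label at each path is the eventual (stable) label of the terms `t σ^i`
at that path. -/
open Classical in
noncomputable def Subst.rt {Sg : Signature} (σ : Subst Sg) (t : HTerm Sg) :
    List ℕ → Option (Sg.Sym ⊕ ℕ) := fun p =>
  if h : ∃ v : Option (Sg.Sym ⊕ ℕ), ∃ N : ℕ, ∀ i ≥ N, (σ.iter i t).labelAt p = v
  then h.choose else none

/-! The theory RT of rational trees, semantically. -/

/-- A first-order structure for the signature `Sg`. -/
structure Struc (Sg : Signature) where
  carrier : Type
  interp : (f : Sg.Sym) → (Fin (Sg.arity f) → carrier) → carrier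

/-- Evaluation of a finite term in a structure under a valuation. -/
def HTerm.eval {Sg : Signature} (A : Struc Sg) (v : ℕ → A.carrier) :
    HTerm Sg → A.carrier
  | .var x => v x
  | .app f ts => A.interp f (fun i => (ts i).eval A v)

/-- Sets of equations between finite terms. -/
abbrev EqSet (Sg : Signature) := Set (HTerm Sg × HTerm Sg)

/-- A valuation satisfies a set of equations (read as their conjunction). -/
def Struc.Sat {Sg : Signature} (A : Struc Sg) (v : ℕ → A.carrier)
    (E : EqSet Sg) : Prop :=
  ∀ e ∈ E, e.1.eval A v = e.2.eval A v

/-- A substitution read as the set of equations `x = σ(x)`, `x ∈ dom σ`. -/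
def Subst.eqs {Sg : Signature} (σ : Subst Sg) : EqSet Sg :=
  {e | ∃ x ∈ σ.dom, e = (HTerm.var x, σ.map x)}

/-- The variables occurring in a set of equations. -/
def eqsVars {Sg : Signature} (E : EqSet Sg) : Set ℕ :=
  ⋃ e ∈ E, (e.1.varsIn ∪ e.2.varsIn)

/-- A model of the theory RT of rational trees: a structure satisfying the
identity axioms (injectivity of each function symbol and distinctness of the
ranges of distinct function symbols) and, for each substitution in rational
solved form, the corresponding uniqueness axiom. -/
structure RTModel (Sg : Signature) where
  struc : Struc Sg
  inj : ∀ (f : Sg.Sym) (a b : Fin (Sg.arity f) → struc.carrier),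
    struc.interp f a = struc.interp f b → a = b
  distinct : ∀ (f g : Sg.Sym) (a : Fin (Sg.arity f) → struc.carrier)
    (b : Fin (Sg.arity g) → struc.carrier), f ≠ g → struc.interp f a ≠ struc.interp g b
  uniqueness : ∀ σ : Subst Sg, σ.InRSF → ∀ v : ℕ → struc.carrier,
    ∃! w : ℕ → struc.carrier,
      (∀ x ∉ σ.dom, w x = v x) ∧ struc.Sat w σ.eqs

/-- `RT ⊢ ∀(E → F)`. -/
def RTImp {Sg : Signature} (E F : EqSet Sg) : Prop :=
  ∀ (A : RTModel Sg) (v : ℕ → A.struc.carrier), A.struc.Sat v E → A.struc.Sat v F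

/-- `RT ⊢ ∀(E ↔ F)`. -/
def RTEquiv {Sg : Signature} (E F : EqSet Sg) : Prop :=
  ∀ (A : RTModel Sg) (v : ℕ → A.struc.carrier), A.struc.Sat v E ↔ A.struc.Sat v F

/-- The set of relevant most general solutions of a set of equations in RT. -/
def mgsRT {Sg : Signature} (E : EqSet Sg) : Set (Subst Sg) :=
  {σ | σ.InRSF ∧ RTEquiv σ.eqs E ∧ σ.varsOf ⊆ eqsVars E}

/-- `↓σ`: the substitutions obtainable as most general solutions of `σ`
together with some further set of equations in rational solved form. -/
def downRT {Sg : Signature} (σ : Subst Sg) : Set (Subst Sg) :=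
  {τ | ∃ σ' : Subst Sg, σ'.InRSF ∧ τ ∈ mgsRT (σ.eqs ∪ σ'.eqs)}

/-- Two valuations agree outside a set `W` of variables. -/
def agreesOff {α : Type _} (W : Set ℕ) (v w : ℕ → α) : Prop :=
  ∀ x ∉ W, v x = w x

/-- `RT ⊢ ∀(∃W.E ↔ ∃W.F)`. -/
def RTExistsEquiv {Sg : Signature} (W : Set ℕ) (E F : EqSet Sg) : Prop :=
  ∀ (A : RTModel Sg) (v : ℕ → A.struc.carrier),
    (∃ w, agreesOff W w v ∧ A.struc.Sat w E) ↔
    (∃ w, agreesOff W w v ∧ A.struc.Sat w F)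

/-- `∃∃x.{σ}` relative to the set `VI` of the variables of interest:
the substitutions `σ'` in rational solved form with
`RT ⊢ ∀(∃ (Vars ∖ VI) . (σ' ↔ ∃x.σ))`. -/
def projExists {Sg : Signature} (VI : Set ℕ) (x : ℕ) (σ : Subst Sg) :
    Set (Subst Sg) :=
  {σ' | σ'.InRSF ∧ ∀ (A : RTModel Sg) (v : ℕ → A.struc.carrier),
    ∃ w, agreesOff VIᶜ w v ∧
      (A.struc.Sat w σ'.eqs ↔ ∃ u, agreesOff {x} u w ∧ A.struc.Sat u σ.eqs)}

/-- `∃∃x.Σ` for a set `Σ` of substitutions. -/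
def projExistsSet {Sg : Signature} (VI : Set ℕ) (x : ℕ) (S : Set (Subst Sg)) :
    Set (Subst Sg) := ⋃ σ ∈ S, projExists VI x σ

/-! Boolean valuations and Boolean functions over the variables of
interest (semantically: only the values on `VI` matter). -/

abbrev BVal := ℕ → Prop
abbrev BFun := BVal → Prop

/-- Entailment `φ ⊨ ψ` of Boolean functions. -/
def BFun.Entails (φ ψ : BFun) : Prop := ∀ a, φ a → ψ a

/-- The Boolean function of a variable. -/
def bVar (x : ℕ) : BFun := fun a => a x

def bAnd (φ ψ : BFun) : BFun := fun a => φ a ∧ ψ a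
def bOr (φ ψ : BFun) : BFun := fun a => φ a ∨ ψ a
def bNot (φ : BFun) : BFun := fun a => ¬ φ a
def bIff (φ ψ : BFun) : BFun := fun a => φ a ↔ ψ a

/-- `⋀S`: the conjunction of the variables in `S` (`⊤` if `S = ∅`). -/
def bConj (S : Set ℕ) : BFun := fun a => ∀ x ∈ S, a x

/-- `∃x.φ = φ[1/x] ∨ φ[0/x]` (Schröder's elimination principle). -/
def bExists (x : ℕ) (φ : BFun) : BFun :=
  fun a => φ (Function.update a x True) ∨ φ (Function.update a x False)

/-- `∃S.φ`: elimination of all the variables of `S`. -/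
def bExistsSet (S : Set ℕ) (φ : BFun) : BFun :=
  fun a => ∃ b : BVal, (∀ x ∉ S, b x = a x) ∧ φ b

/-- `true(φ)`: the variables of `VI` necessarily true for `φ`. -/
def trueVars (VI : Set ℕ) (φ : BFun) : Set ℕ := {x ∈ VI | ∀ a, φ a → a x}

/-- `false(φ)`: the variables of `VI` necessarily false for `φ`. -/
def falseVars (VI : Set ℕ) (φ : BFun) : Set ℕ := {x ∈ VI | ∀ a, φ a → ¬ a x}

/-- `φ ∈ Pos`: `φ` is true under the everything-is-true assignment. -/
def IsPos (φ : BFun) : Prop := φ (fun _ => True)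

/-- `pos(φ) = φ ∨ ⋀VI`. -/
def bPos (VI : Set ℕ) (φ : BFun) : BFun := bOr φ (bConj VI)

/-- `hval(σ)`: the valuation assigning true exactly to the variables of
`hvars(σ)`. -/
def Subst.hval {Sg : Signature} (σ : Subst Sg) : BVal := fun x => x ∈ σ.hvars

/-- `gval(σ)`: the valuation assigning true exactly to the variables of
`gvars(σ)`. -/
noncomputable def Subst.gval {Sg : Signature} (σ : Subst Sg) : BVal :=
  fun x => x ∈ σ.gvars

/-- `γ_H(h)`. -/
def gammaH {Sg : Signature} (h : Set ℕ) : Set (Subst Sg) :=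
  {σ | σ.InRSF ∧ h ⊆ σ.hvars}

/-- `γ_FD(φ)`. -/
def gammaFD {Sg : Signature} (φ : BFun) : Set (Subst Sg) :=
  {σ | σ.InRSF ∧ ∀ τ ∈ downRT σ, φ τ.hval}

/-- `γ_GD(ψ)`. -/
noncomputable def gammaGD {Sg : Signature} (ψ : BFun) : Set (Subst Sg) :=
  {σ | σ.InRSF ∧ ∀ τ ∈ downRT σ, ψ τ.gval}

/-- The substitution consisting of the single binding `x ↦ t`. -/
def singleSubst {Sg : Signature} (x : ℕ) (t : HTerm Sg) : Subst Sg where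
  map := fun y => if y = x then t else HTerm.var y
  finite := Set.Finite.subset (Set.finite_singleton x) (fun y hy => by
    by_contra hxy
    rw [Set.mem_singleton_iff] at hxy
    simp only [Set.mem_setOf_eq] at hy
    exact hy (if_neg hxy))

/-! ### Auxiliary development for the main theorem -/

open Classical

namespace AMGU

variable {Sg : Signature}

/-- Size of a finite term. -/
def sizT : HTerm Sg → ℕ
  | .var _ => 1
  | .app _ ts => 1 + ∑ i, sizT (ts i)

lemma sizT_pos (u : HTerm Sg) : 0 < sizT u := by
  cases u <;> simp [sizT]

/-- Finset of variables of a finite term. -/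
noncomputable def fvs : HTerm Sg → Finset ℕ
  | .var z => {z}
  | .app _ ts => Finset.univ.biUnion (fun i => fvs (ts i))

lemma mem_fvs {a : ℕ} : ∀ {u : HTerm Sg}, a ∈ fvs u ↔ a ∈ u.varsIn
  | .var z => by simp [fvs, HTerm.varsIn]
  | .app f ts => by
      simp only [fvs, Finset.mem_biUnion, Finset.mem_univ, true_and, HTerm.varsIn,
        Set.mem_iUnion]
      exact exists_congr fun i => mem_fvs

lemma varsIn_finite (u : HTerm Sg) : u.varsIn.Finite := by
  have : u.varsIn ⊆ ↑(fvs u) := fun a ha => by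
    simpa [mem_fvs] using ha
  exact Set.Finite.subset (fvs u).finite_toSet this

/-- `labelAt` of a compound term at a child path. -/
lemma labelAt_app_cons {f : Sg.Sym} {ts : Fin (Sg.arity f) → HTerm Sg}
    (i : Fin (Sg.arity f)) (p : List ℕ) :
    (HTerm.app f ts).labelAt (↑i :: p) = (ts i).labelAt p := by
  simp [HTerm.labelAt, i.isLt]

lemma labelAt_root_isSome (u : HTerm Sg) : (u.labelAt []).isSome := by
  cases u <;> simp [HTerm.labelAt]

/-- Characterization of variable occurrences via `labelAt`. -/
lemma mem_varsIn_iff_labelAt {a : ℕ} :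
    ∀ {u : HTerm Sg}, a ∈ u.varsIn ↔ ∃ p, u.labelAt p = some (Sum.inr a)
  | .var z => by
      constructor
      · rintro rfl; exact ⟨[], rfl⟩
      · rintro ⟨p, hp⟩
        cases p with
        | nil => simp [HTerm.labelAt] at hp; simp [hp, HTerm.varsIn]
        | cons i q => simp [HTerm.labelAt] at hp
  | .app f ts => by
      constructor
      · intro ha
        simp only [HTerm.varsIn, Set.mem_iUnion] at ha
        obtain ⟨i, hi⟩ := ha
        obtain ⟨p, hp⟩ := mem_varsIn_iff_labelAt.1 hi
        exact ⟨↑i :: p, by rw [labelAt_app_cons]; exact hp⟩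
      · rintro ⟨p, hp⟩
        cases p with
        | nil => simp [HTerm.labelAt] at hp
        | cons i q =>
            simp only [HTerm.labelAt] at hp
            by_cases h : i < Sg.arity f
            · rw [dif_pos h] at hp
              simp only [HTerm.varsIn, Set.mem_iUnion]
              exact ⟨⟨i, h⟩, mem_varsIn_iff_labelAt.2 ⟨q, hp⟩⟩
            · rw [dif_neg h] at hp; exact absurd hp (by simp)

lemma treeVars_labelAt (u : HTerm Sg) : treeVars (Sg := Sg) u.labelAt = u.varsIn := by
  ext a
  simp [treeVars, mem_varsIn_iff_labelAt]

/-- Finite terms have finite trees. -/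
lemma treeFinite_labelAt : ∀ u : HTerm Sg, treeFinite (Sg := Sg) u.labelAt
  | .var z => Set.Finite.subset (Set.finite_singleton []) (by
      rintro (_ | ⟨i, p⟩) hp
      · rfl
      · simp [HTerm.labelAt] at hp)
  | .app f ts => by
      have h : {p | ((HTerm.app f ts).labelAt p).isSome} ⊆
          {[]} ∪ ⋃ i : Fin (Sg.arity f),
            (fun q => (↑i : ℕ) :: q) '' {q | ((ts i).labelAt q).isSome} := by
        rintro (_ | ⟨i, q⟩) hp
        · exact Or.inl rfl
        · right
          simp only [Set.mem_setOf_eq, HTerm.labelAt] at hp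
          by_cases h : i < Sg.arity f
          · rw [dif_pos h] at hp
            exact Set.mem_iUnion.2 ⟨⟨i, h⟩, ⟨q, hp, rfl⟩⟩
          · rw [dif_neg h] at hp; simp at hp
      exact Set.Finite.subset
        ((Set.finite_singleton []).union
          (Set.finite_iUnion fun i => (treeFinite_labelAt (ts i)).image _)) h

/-- Children of a linear tree are linear. -/
lemma treeLinear_child {f : Sg.Sym} {ts : Fin (Sg.arity f) → HTerm Sg}
    (h : treeLinear (Sg := Sg) (HTerm.app f ts).labelAt) (i : Fin (Sg.arity f)) :
    treeLinear (Sg := Sg) (ts i).labelAt := by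
  intro y p q hp hq
  have := h y (↑i :: p) (↑i :: q)
    (by rw [labelAt_app_cons]; exact hp) (by rw [labelAt_app_cons]; exact hq)
  exact List.tail_eq_of_cons_eq this

/-- Distinct children of a linear tree have disjoint variables. -/
lemma treeLinear_child_disjoint {f : Sg.Sym} {ts : Fin (Sg.arity f) → HTerm Sg}
    (h : treeLinear (Sg := Sg) (HTerm.app f ts).labelAt) {i j : Fin (Sg.arity f)}
    (hij : i ≠ j) {a : ℕ} (hi : a ∈ (ts i).varsIn) (hj : a ∈ (ts j).varsIn) : False := by
  obtain ⟨p, hp⟩ := mem_varsIn_iff_labelAt.1 hi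
  obtain ⟨q, hq⟩ := mem_varsIn_iff_labelAt.1 hj
  have := h a (↑i :: p) (↑j :: q)
    (by rw [labelAt_app_cons]; exact hp) (by rw [labelAt_app_cons]; exact hq)
  exact hij (Fin.ext (by exact_mod_cast List.head_eq_of_cons_eq this))

/-! ### Substitution and evaluation lemmas -/

lemma varsIn_substRaw {m : ℕ → HTerm Sg} :
    ∀ {u : HTerm Sg}, (u.substRaw m).varsIn = ⋃ z ∈ u.varsIn, (m z).varsIn
  | .var z => by simp [HTerm.substRaw, HTerm.varsIn]
  | .app f ts => by
      simp only [HTerm.substRaw, HTerm.varsIn]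
      rw [Set.biUnion_iUnion]
      exact Set.iUnion_congr fun i => varsIn_substRaw

lemma substRaw_congr {m m' : ℕ → HTerm Sg} :
    ∀ {u : HTerm Sg}, (∀ z ∈ u.varsIn, m z = m' z) → u.substRaw m = u.substRaw m'
  | .var z, h => h z (by simp [HTerm.varsIn])
  | .app f ts, h => by
      simp only [HTerm.substRaw]
      congr 1
      funext i
      exact substRaw_congr fun z hz => h z (by
        simp only [HTerm.varsIn, Set.mem_iUnion]; exact ⟨i, hz⟩)

lemma substRaw_var : ∀ u : HTerm Sg, u.substRaw HTerm.var = u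
  | .var z => rfl
  | .app f ts => by
      simp only [HTerm.substRaw]
      congr 1
      funext i
      exact substRaw_var (ts i)

lemma substRaw_substRaw {m m' : ℕ → HTerm Sg} :
    ∀ u : HTerm Sg, (u.substRaw m').substRaw m = u.substRaw (fun z => (m' z).substRaw m)
  | .var z => rfl
  | .app f ts => by
      simp only [HTerm.substRaw]
      congr 1
      funext i
      exact substRaw_substRaw (ts i)

variable {A : Struc Sg}

lemma eval_app (A : Struc Sg) (w : ℕ → A.carrier) (f : Sg.Sym)
    (ts : Fin (Sg.arity f) → HTerm Sg) :
    (HTerm.app f ts).eval A w = A.interp f (fun i => (ts i).eval A w) := rfl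

/-- Substitution lemma for evaluation. -/
lemma eval_substRaw (A : Struc Sg) (w : ℕ → A.carrier) (m : ℕ → HTerm Sg) :
    ∀ u : HTerm Sg, (u.substRaw m).eval A w = u.eval A (fun z => (m z).eval A w)
  | .var z => rfl
  | .app f ts => by
      simp only [HTerm.substRaw, HTerm.eval]
      congr 1
      funext i
      exact eval_substRaw A w m (ts i)

lemma eval_congr (A : Struc Sg) {w w' : ℕ → A.carrier} :
    ∀ {u : HTerm Sg}, (∀ z ∈ u.varsIn, w z = w' z) → u.eval A w = u.eval A w'
  | .var z, h => h z (by simp [HTerm.varsIn])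
  | .app f ts, h => by
      simp only [HTerm.eval]
      congr 1
      funext i
      exact eval_congr A fun z hz => h z (by
        simp only [HTerm.varsIn, Set.mem_iUnion]; exact ⟨i, hz⟩)

/-- If `w` satisfies `σ`, applying `σ` does not change evaluation. -/
lemma eval_apply_of_sat {σ : Subst Sg} {w : ℕ → A.carrier}
    (hw : A.Sat w σ.eqs) : ∀ u : HTerm Sg, (σ.apply u).eval A w = u.eval A w := by
  intro u
  induction u with
  | var z =>
      by_cases hz : z ∈ σ.dom
      · exact (hw (HTerm.var z, σ.map z) ⟨z, hz, rfl⟩).symm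
      · have : σ.map z = HTerm.var z := not_not.1 hz
        show (σ.map z).eval A w = _
        rw [this]
  | app f ts ih =>
      show ((HTerm.app f ts).substRaw σ.map).eval A w = _
      simp only [HTerm.substRaw, HTerm.eval]
      congr 1
      funext i
      exact ih i

lemma eval_iter_of_sat {σ : Subst Sg} {w : ℕ → A.carrier}
    (hw : A.Sat w σ.eqs) (n : ℕ) (u : HTerm Sg) :
    (σ.iter n u).eval A w = u.eval A w := by
  induction n with
  | zero => rfl
  | succ n ih =>
      rw [Subst.iter, Function.iterate_succ_apply', ← Subst.iter]
      rw [eval_apply_of_sat hw, ih]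

/-! ### The tree model -/

/-- The structure of (possibly infinite, raw) trees. -/
def treeStruc (Sg : Signature) : Struc Sg where
  carrier := List ℕ → Option (Sg.Sym ⊕ ℕ)
  interp f a := fun p =>
    match p with
    | [] => some (Sum.inl f)
    | i :: q => if h : i < Sg.arity f then a ⟨i, h⟩ q else none

/-- `labelAt` is a homomorphism into the tree structure. -/
lemma labelAt_app (f : Sg.Sym) (ts : Fin (Sg.arity f) → HTerm Sg) :
    (HTerm.app f ts).labelAt =
      (treeStruc Sg).interp f (fun i => (ts i).labelAt) := by
  funext p
  cases p with
  | nil => rfl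
  | cons i q => rfl

/-- Evaluating a term in the tree model on variable labels yields `labelAt`
of the substituted term. -/
lemma eval_treeStruc_labelAt (v : ℕ → HTerm Sg) :
    ∀ u : HTerm Sg, u.eval (treeStruc Sg) (fun z => (v z).labelAt) =
      (u.substRaw v).labelAt
  | .var z => rfl
  | .app f ts => by
      show (treeStruc Sg).interp f _ = _
      rw [show (HTerm.app f ts).substRaw v
          = HTerm.app f (fun i => (ts i).substRaw v) from rfl, labelAt_app]
      congr 1
      funext i
      exact eval_treeStruc_labelAt v (ts i)

lemma eval_treeStruc_cons {w : ℕ → (treeStruc Sg).carrier} (f : Sg.Sym)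
    (ts : Fin (Sg.arity f) → HTerm Sg) (i : Fin (Sg.arity f)) (q : List ℕ) :
    (HTerm.app f ts).eval (treeStruc Sg) w (↑i :: q) = (ts i).eval (treeStruc Sg) w q := by
  show (treeStruc Sg).interp f _ (↑i :: q) = _
  simp only [treeStruc]
  rw [dif_pos i.isLt]

lemma eval_treeStruc_nil {w : ℕ → (treeStruc Sg).carrier} (f : Sg.Sym)
    (ts : Fin (Sg.arity f) → HTerm Sg) :
    (HTerm.app f ts).eval (treeStruc Sg) w [] = some (Sum.inl f) := rfl

/-! ### Well-foundedness of variable chains in rational solved form -/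

/-- `DownR σ z y`: the binding for `z` is the variable `y`. -/
def DownR (σ : Subst Sg) (z y : ℕ) : Prop := z ∈ σ.dom ∧ σ.map z = HTerm.var y

/-- No periodic descending variable chain exists for a substitution in RSF. -/
lemma no_periodic_chain {σ : Subst Sg} (hσ : σ.InRSF) :
    ∀ n, 0 < n → ∀ c : ℕ → ℕ, (∀ i, DownR σ (c i) (c (i + 1))) →
      (∀ i, c (i + n) = c i) → False := by
  intro n
  induction n using Nat.strong_induction_on with
  | _ n ih =>
  intro hn c hc hp
  by_cases hinj : ∀ i j, i < n → j < n → c i = c j → i = j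
  · -- a genuine cycle with distinct elements
    rcases Nat.lt_or_ge n 2 with h2 | h2
    · -- n = 1 : c 0 ↦ c 0
      interval_cases n
      have h01 : c 1 = c 0 := hp 0
      have := (hc 0).2
      rw [h01] at this
      exact (hc 0).1 this
    · -- n ≥ 2 : build a circular binding set
      apply hσ {p | ∃ i < n, p = (c i, HTerm.var (c ((i + 1) % n)))}
      · rintro p ⟨i, hi, rfl⟩
        refine ⟨(hc i).1, ?_⟩
        have : c ((i + 1) % n) = c (i + 1) := by
          rcases Nat.lt_or_ge (i + 1) n with h | h
          · rw [Nat.mod_eq_of_lt h]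
          · have : i + 1 = n := by omega
            subst this
            rw [Nat.mod_self]
            have := hp 0
            simp only [Nat.zero_add] at this
            exact this.symm
        rw [this]
        exact ((hc i).2).symm
      · exact ⟨n, h2, c, hinj, rfl⟩
  · -- duplicates: shorten the cycle
    push_neg at hinj
    obtain ⟨i, j, hi, hj, hcij, hij⟩ := hinj
    -- wlog i < j
    wlog hlt : i < j generalizing i j
    · exact this j i hj hi hcij.symm (Ne.symm hij) (by omega)
    set m := j - i with hm
    have hm0 : 0 < m := by omega
    have hmn : m < n := by omega
    refine ih m hmn hm0 (fun k => c (i + k % m)) (fun k => ?_) (fun k => ?_)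
    · show DownR σ (c (i + k % m)) (c (i + (k + 1) % m))
      have hadd : (k + 1) % m = (k % m + 1 % m) % m := Nat.add_mod k 1 m
      rcases Nat.lt_or_ge 1 m with hm2 | hm1
      · -- m ≥ 2
        have h1m : 1 % m = 1 := Nat.mod_eq_of_lt hm2
        rcases Nat.lt_or_ge (k % m + 1) m with h | h
        · have h1 : (k + 1) % m = k % m + 1 := by
            rw [hadd, h1m, Nat.mod_eq_of_lt h]
          rw [h1]
          have h3 := hc (i + k % m)
          have he : i + k % m + 1 = i + (k % m + 1) := by omega
          rwa [he] at h3
        · have hkm : k % m = m - 1 := by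
            have := Nat.mod_lt k hm0
            omega
          have h1 : (k + 1) % m = 0 := by
            rw [hadd, h1m, hkm]
            have : m - 1 + 1 = m := by omega
            rw [this, Nat.mod_self]
          rw [h1, hkm]
          have h3 := hc (i + (m - 1))
          have he : i + (m - 1) + 1 = j := by omega
          rw [he, ← hcij] at h3
          simpa using h3
      · -- m = 1
        have hm1' : m = 1 := by omega
        rw [hm1']
        simp only [Nat.mod_one, Nat.add_zero]
        have h3 := hc i
        have he : i + 1 = j := by omega
        rw [he, ← hcij] at h3
        exact h3
    · show c (i + (k + m) % m) = c (i + k % m)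
      rw [Nat.add_mod_right]

lemma chain_getD {r : ℕ → ℕ → Prop} :
    ∀ {l : List ℕ} {a : ℕ}, List.Chain r a l →
      ∀ i, i + 1 < (a :: l).length →
        r ((a :: l).getD i 0) ((a :: l).getD (i + 1) 0)
  | [], a, _, i, h => by simp at h
  | b :: l', a, h, i, hi => by
      rcases List.chain_cons.1 h with ⟨hab, hch⟩
      cases i with
      | zero => exact hab
      | succ i =>
          have := chain_getD hch i (by simpa using hi)
          simpa using this

/-- No "lasso": a descending variable path cannot loop back. -/
lemma no_lasso {σ : Subst Sg} (hσ : σ.InRSF) {a b : ℕ}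
    (hab : Relation.ReflTransGen (DownR σ) a b) (hba : DownR σ b a) : False := by
  obtain ⟨l, hch, hlast⟩ := List.exists_isChain_cons_of_relationReflTransGen hab
  set V : List ℕ := a :: l with hV
  have hVne : V ≠ [] := by simp [hV]
  set n := V.length with hn
  have hn0 : 0 < n := by simp [hn, hV]
  refine no_periodic_chain hσ n hn0 (fun k => V.getD (k % n) 0) (fun k => ?_)
    (fun k => ?_)
  · show DownR σ (V.getD (k % n) 0) (V.getD ((k + 1) % n) 0)
    rcases Nat.lt_or_ge (k % n + 1) n with h | h
    · have h1 : (k + 1) % n = k % n + 1 := by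
        rw [Nat.add_mod k 1 n]
        have h2 : 1 % n ≤ 1 := Nat.mod_le 1 n
        have h1n : 1 % n = 1 ∨ 1 % n = 0 := by omega
        rcases h1n with h1n | h1n
        · rw [h1n, Nat.mod_eq_of_lt h]
        · -- n = 1, contradicts k % n + 1 < n
          have : n = 1 := by
            rcases Nat.lt_or_ge 1 n with hh | hh
            · rw [Nat.mod_eq_of_lt hh] at h1n; omega
            · omega
          omega
      rw [h1]
      exact chain_getD hch (k % n) (by simp only [← hV, ← hn]; omega)
    · have hkm : k % n = n - 1 := by
        have := Nat.mod_lt k hn0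
        omega
      have h1 : (k + 1) % n = 0 := by
        rw [Nat.add_mod k 1 n, hkm]
        have h2 : (n - 1 + 1 % n) % n = 0 := by
          rcases Nat.lt_or_ge 1 n with hh | hh
          · rw [Nat.mod_eq_of_lt hh]
            have : n - 1 + 1 = n := by omega
            rw [this, Nat.mod_self]
          · have : n = 1 := by omega
            simp [this]
        exact h2
      rw [h1, hkm]
      -- V.getD (n-1) 0 = last of V = b, V.getD 0 0 = a
      have hlastD : V.getD (n - 1) 0 = b := by
        have h3 : V.getD (n - 1) 0 = V.getLast hVne := by
          rw [List.getLast_eq_getElem]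
          exact List.getD_eq_getElem V 0 (by omega)
        rw [h3, ← hlast]
      rw [hlastD]
      have : V.getD 0 0 = a := by simp [hV]
      rw [this]
      exact hba
  · show V.getD ((k + n) % n) 0 = V.getD (k % n) 0
    rw [Nat.add_mod_right]

/-- Rank of a variable: the number of variables reachable by descending
variable chains. -/
noncomputable def rank (σ : Subst Sg) (z : ℕ) : ℕ :=
  (σ.finite.toFinset.filter (fun y => Relation.ReflTransGen (DownR σ) z y)).card

lemma rank_le (σ : Subst Sg) (z : ℕ) : rank σ z ≤ σ.finite.toFinset.card :=
  Finset.card_le_card (Finset.filter_subset _ _)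

lemma rank_lt {σ : Subst Sg} (hσ : σ.InRSF) {z y : ℕ} (h : DownR σ z y) :
    rank σ y < rank σ z := by
  apply Finset.card_lt_card
  constructor
  · intro w hw
    rw [Finset.mem_filter] at hw ⊢
    exact ⟨hw.1, Relation.ReflTransGen.head h hw.2⟩
  · intro hsub
    have hz : z ∈ σ.finite.toFinset.filter
        (fun y => Relation.ReflTransGen (DownR σ) z y) := by
      rw [Finset.mem_filter]
      exact ⟨by rw [Set.Finite.mem_toFinset]; exact h.1, Relation.ReflTransGen.refl⟩
    have hz' := hsub hz
    rw [Finset.mem_filter] at hz'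
    exact no_lasso hσ hz'.2 h

/-- Term rank used as a termination measure. -/
noncomputable def rankT (σ : Subst Sg) : HTerm Sg → ℕ
  | .var z => rank σ z + 1
  | .app _ _ => 0

lemma rankT_map_lt {σ : Subst Sg} (hσ : σ.InRSF) {z : ℕ} (hz : z ∈ σ.dom) :
    rankT σ (σ.map z) < rankT σ (HTerm.var z) := by
  cases hm : σ.map z with
  | var z' =>
      show rank σ z' + 1 < rank σ z + 1
      exact Nat.succ_lt_succ (rank_lt hσ ⟨hz, hm⟩)
  | app f ts => exact Nat.succ_pos _

lemma rankT_le (σ : Subst Sg) (u : HTerm Sg) :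
    rankT σ u ≤ σ.finite.toFinset.card + 1 := by
  cases u with
  | var z => exact Nat.succ_le_succ (rank_le σ z)
  | app f ts => exact Nat.zero_le _

/-- Unfolding of a term along a path through a substitution in RSF. -/
noncomputable def expand (σ : Subst Sg) (hσ : σ.InRSF)
    (v : ℕ → List ℕ → Option (Sg.Sym ⊕ ℕ)) :
    HTerm Sg → List ℕ → Option (Sg.Sym ⊕ ℕ)
  | .var z, p =>
      if h : σ.map z = .var z then v z p else expand σ hσ v (σ.map z) p
  | .app f _, [] => some (Sum.inl f)
  | .app f ts, i :: q =>
      if h : i < Sg.arity f then expand σ hσ v (ts ⟨i, h⟩) q else none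
termination_by u p => p.length * (σ.finite.toFinset.card + 2) + rankT σ u
decreasing_by
  · have := rankT_map_lt hσ (show z ∈ σ.dom from h)
    omega
  · have h1 := rankT_le σ (ts ⟨i, h⟩)
    have h2 : (i :: q).length = q.length + 1 := rfl
    rw [h2]
    have : (q.length + 1) * (σ.finite.toFinset.card + 2)
        = q.length * (σ.finite.toFinset.card + 2) + (σ.finite.toFinset.card + 2) := by ring
    omega

lemma expand_var_nondom (σ : Subst Sg) (hσ : σ.InRSF) (v) {z : ℕ}
    (hz : z ∉ σ.dom) (p : List ℕ) : expand σ hσ v (.var z) p = v z p := by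
  rw [expand]
  exact dif_pos (not_not.1 hz)

lemma expand_var_dom (σ : Subst Sg) (hσ : σ.InRSF) (v) {z : ℕ}
    (hz : z ∈ σ.dom) (p : List ℕ) :
    expand σ hσ v (.var z) p = expand σ hσ v (σ.map z) p := by
  rw [expand]
  exact dif_neg hz

lemma expand_app_nil (σ : Subst Sg) (hσ : σ.InRSF) (v) (f : Sg.Sym)
    (ts : Fin (Sg.arity f) → HTerm Sg) :
    expand σ hσ v (.app f ts) [] = some (Sum.inl f) := by
  rw [expand]

lemma expand_app_cons (σ : Subst Sg) (hσ : σ.InRSF) (v) (f : Sg.Sym)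
    (ts : Fin (Sg.arity f) → HTerm Sg) (i : ℕ) (q : List ℕ) :
    expand σ hσ v (.app f ts) (i :: q)
      = if h : i < Sg.arity f then expand σ hσ v (ts ⟨i, h⟩) q else none := by
  rw [expand]

lemma eval_treeStruc_consD (w : ℕ → (treeStruc Sg).carrier) (f : Sg.Sym)
    (ts : Fin (Sg.arity f) → HTerm Sg) (i : ℕ) (q : List ℕ) :
    (HTerm.app f ts).eval (treeStruc Sg) w (i :: q)
      = if h : i < Sg.arity f then (ts ⟨i, h⟩).eval (treeStruc Sg) w q else none := rfl

/-- Evaluating on the expansions of variables yields the expansion. -/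
lemma eval_expand (σ : Subst Sg) (hσ : σ.InRSF) (v) :
    ∀ u : HTerm Sg,
      u.eval (treeStruc Sg) (fun z => expand σ hσ v (.var z)) = expand σ hσ v u
  | .var z => rfl
  | .app f ts => by
      funext p
      cases p with
      | nil => exact (eval_treeStruc_nil f ts).trans (expand_app_nil σ hσ v f ts).symm
      | cons i q =>
          refine (eval_treeStruc_consD _ f ts i q).trans ?_
          rw [expand_app_cons]
          by_cases h : i < Sg.arity f
          · rw [dif_pos h, dif_pos h, eval_expand σ hσ v (ts ⟨i, h⟩)]
          · rw [dif_neg h, dif_neg h]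

/-- Any solution of `σ` with prescribed values off the domain agrees with the
expansion. -/
lemma eval_eq_expand (σ : Subst Sg) (hσ : σ.InRSF) (v)
    (w' : ℕ → (treeStruc Sg).carrier) (hoff : ∀ z ∉ σ.dom, w' z = v z)
    (hsat : (treeStruc Sg).Sat w' σ.eqs) (u : HTerm Sg) (p : List ℕ) :
    u.eval (treeStruc Sg) w' p = expand σ hσ v u p := by
  set D := σ.finite.toFinset.card with hD
  suffices h : ∀ N : ℕ, ∀ (u : HTerm Sg) (p : List ℕ),
      p.length * (D + 2) + rankT σ u ≤ N →
        u.eval (treeStruc Sg) w' p = expand σ hσ v u p by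
    exact h _ u p le_rfl
  intro N
  induction N using Nat.strong_induction_on with
  | _ N ih =>
  intro u p hN
  cases u with
  | var z =>
      by_cases hz : z ∈ σ.dom
      · have h1 : (HTerm.var z).eval (treeStruc Sg) w' = w' z := rfl
        have h2 : w' z = (σ.map z).eval (treeStruc Sg) w' :=
          hsat (HTerm.var z, σ.map z) ⟨z, hz, rfl⟩
        rw [h1, h2, expand_var_dom σ hσ v hz]
        have hlt := rankT_map_lt hσ hz
        rcases Nat.exists_eq_succ_of_ne_zero (show N ≠ 0 by
          have := rankT_map_lt hσ hz
          simp only [rankT] at hN ⊢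
          omega) with ⟨M, rfl⟩
        exact ih M (Nat.lt_succ_self M) (σ.map z) p (by omega)
      · have h1 : (HTerm.var z).eval (treeStruc Sg) w' = w' z := rfl
        rw [h1, hoff z hz, expand_var_nondom σ hσ v hz]
  | app f ts =>
      cases p with
      | nil => rw [eval_treeStruc_nil, expand_app_nil]
      | cons i q =>
          rw [eval_treeStruc_consD, expand_app_cons]
          by_cases h : i < Sg.arity f
          · rw [dif_pos h, dif_pos h]
            have hb := rankT_le σ (ts ⟨i, h⟩)
            rw [← hD] at hb
            have hlen : (i :: q).length = q.length + 1 := rfl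
            rcases Nat.exists_eq_succ_of_ne_zero (show N ≠ 0 by
              rw [hlen] at hN
              have : (q.length + 1) * (D + 2) = q.length * (D + 2) + (D + 2) := by ring
              omega) with ⟨M, rfl⟩
            refine ih M (Nat.lt_succ_self M) (ts ⟨i, h⟩) q ?_
            rw [hlen] at hN
            have : (q.length + 1) * (D + 2) = q.length * (D + 2) + (D + 2) := by ring
            omega
          · rw [dif_neg h, dif_neg h]

/-- The tree model of the theory RT. -/
noncomputable def treeModel (Sg : Signature) : RTModel Sg where
  struc := treeStruc Sg
  inj := by
    intro f a b h
    funext i q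
    have h1 : ∀ c : Fin (Sg.arity f) → (treeStruc Sg).carrier,
        (treeStruc Sg).interp f c (↑i :: q) = c i q := by
      intro c
      show (if h : ↑i < Sg.arity f then c ⟨↑i, h⟩ q else none) = c i q
      rw [dif_pos i.isLt]
    have := congrFun h (↑i :: q)
    rw [h1 a, h1 b] at this
    exact this
  distinct := by
    intro f g a b hne h
    have := congrFun h []
    simp only [treeStruc] at this
    rw [Option.some_inj] at this
    exact hne (by injection this)
  uniqueness := by
    intro σ' hσ' v
    refine ⟨fun z => expand σ' hσ' v (.var z), ⟨fun z hz => ?_, ?_⟩, ?_⟩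
    · funext p
      exact expand_var_nondom σ' hσ' v hz p
    · rintro e ⟨z, hz, rfl⟩
      show (HTerm.var z).eval _ _ = _
      rw [eval_expand σ' hσ' v, eval_expand σ' hσ' v]
      funext p
      exact expand_var_dom σ' hσ' v hz p
    · rintro w' ⟨hoff, hsat⟩
      funext z
      have := eval_eq_expand σ' hσ' v w' (fun z hz => hoff z hz) hsat (HTerm.var z)
      exact funext fun p => this p

/-! ### hvars lemmas -/

lemma hvarsN_succ_subset (σ : Subst Sg) (n : ℕ) : σ.hvarsN n ⊆ σ.hvarsN (n + 1) :=
  Set.subset_union_left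

lemma hvarsN_mono (σ : Subst Sg) {m n : ℕ} (h : m ≤ n) : σ.hvarsN m ⊆ σ.hvarsN n := by
  induction n with
  | zero => rw [Nat.le_zero.1 h]
  | succ n ih =>
      rcases Nat.lt_or_ge m (n + 1) with h' | h'
      · exact (ih (by omega)).trans (hvarsN_succ_subset σ n)
      · rw [show m = n + 1 by omega]

lemma mem_hvars {σ : Subst Sg} {y : ℕ} : y ∈ σ.hvars ↔ ∃ n, y ∈ σ.hvarsN n :=
  Set.mem_iUnion

lemma finite_subset_hvarsN {σ : Subst Sg} {S : Set ℕ} (hfin : S.Finite)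
    (h : S ⊆ σ.hvars) : ∃ N, S ⊆ σ.hvarsN N := by
  have hch : ∀ z : ℕ, ∃ n, z ∈ S → z ∈ σ.hvarsN n := by
    intro z
    by_cases hz : z ∈ S
    · obtain ⟨n, hn⟩ := mem_hvars.1 (h hz)
      exact ⟨n, fun _ => hn⟩
    · exact ⟨0, fun h' => absurd h' hz⟩
  choose g hg using hch
  refine ⟨hfin.toFinset.sup g, fun z hz => ?_⟩
  exact hvarsN_mono σ (Finset.le_sup (hfin.mem_toFinset.2 hz)) (hg z hz)

lemma mem_hvars_of_map {σ : Subst Sg} {z : ℕ} (hz : z ∈ σ.dom)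
    (h : (σ.map z).varsIn ⊆ σ.hvars) : z ∈ σ.hvars := by
  obtain ⟨N, hN⟩ := finite_subset_hvarsN (varsIn_finite (σ.map z)) h
  exact mem_hvars.2 ⟨N + 1, Or.inr ⟨hz, hN⟩⟩

lemma map_varsIn_of_hvarsN {σ : Subst Sg} {z : ℕ} (hz : z ∈ σ.dom) :
    ∀ {m : ℕ}, z ∈ σ.hvarsN (m + 1) → (σ.map z).varsIn ⊆ σ.hvarsN m := by
  intro m
  induction m with
  | zero =>
      rintro (h | h)
      · exact absurd hz (by exact h)
      · exact h.2
  | succ m ih =>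
      rintro (h | h)
      · exact (ih h).trans (hvarsN_succ_subset σ m)
      · exact h.2

lemma apply_varsIn_of_hvarsN {σ : Subst Sg} {z : ℕ} {n : ℕ}
    (h : z ∈ σ.hvarsN (n + 1)) : (σ.apply (HTerm.var z)).varsIn ⊆ σ.hvarsN n := by
  by_cases hz : z ∈ σ.dom
  · exact map_varsIn_of_hvarsN hz h
  · have : σ.apply (HTerm.var z) = HTerm.var z := not_not.1 hz
    rw [this]
    intro a ha
    have : a = z := by simpa [HTerm.varsIn] using ha
    subst this
    exact hvarsN_mono σ (Nat.zero_le n) (show a ∈ σ.hvarsN 0 from hz)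

lemma apply_of_varsIn_nondom {σ : Subst Sg} {u : HTerm Sg}
    (h : ∀ z ∈ u.varsIn, z ∉ σ.dom) : σ.apply u = u := by
  induction u with
  | var z =>
      exact not_not.1 (h z (by simp [HTerm.varsIn]))
  | app f ts ih =>
      show (HTerm.app f ts).substRaw σ.map = _
      simp only [HTerm.substRaw]
      congr 1
      funext i
      exact ih i fun z hz => h z (by
        simp only [HTerm.varsIn, Set.mem_iUnion]; exact ⟨i, hz⟩)

lemma iter_varsIn_nondom {σ : Subst Sg} :
    ∀ {n : ℕ} {u : HTerm Sg}, u.varsIn ⊆ σ.hvarsN n →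
      ∀ z ∈ (σ.iter n u).varsIn, z ∉ σ.dom := by
  intro n
  induction n with
  | zero =>
      intro u hu z hz
      exact hu hz
  | succ n ih =>
      intro u hu z hz
      have h1 : σ.iter (n + 1) u = σ.iter n (σ.apply u) := by
        rw [Subst.iter, Function.iterate_succ_apply]
        rfl
      rw [h1] at hz
      refine ih ?_ z hz
      rw [show σ.apply u = u.substRaw σ.map from rfl, varsIn_substRaw]
      intro a ha
      simp only [Set.mem_iUnion] at ha
      obtain ⟨b, hb, hab⟩ := ha
      exact apply_varsIn_of_hvarsN (hu hb) hab

lemma iter_stable {σ : Subst Sg} {n : ℕ} {u : HTerm Sg}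
    (hu : u.varsIn ⊆ σ.hvarsN n) : ∀ {m : ℕ}, n ≤ m → σ.iter m u = σ.iter n u := by
  intro m hm
  induction m with
  | zero => rw [Nat.le_zero.1 hm]
  | succ m ih =>
      rcases Nat.lt_or_ge n (m + 1) with h' | h'
      · have hm' : n ≤ m := by omega
        rw [Subst.iter, Function.iterate_succ_apply', ← Subst.iter, ih hm']
        exact apply_of_varsIn_nondom (iter_varsIn_nondom hu)
      · rw [show n = m + 1 by omega]

/-- Computation of the rational-tree limit in the stabilized case. -/
lemma rt_eq_labelAt {σ : Subst Sg} {n : ℕ} {u : HTerm Sg}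
    (hu : u.varsIn ⊆ σ.hvarsN n) : σ.rt u = (σ.iter n u).labelAt := by
  funext p
  have hex : ∃ v : Option (Sg.Sym ⊕ ℕ), ∃ N : ℕ,
      ∀ i ≥ N, (σ.iter i u).labelAt p = v := by
    refine ⟨(σ.iter n u).labelAt p, n, fun i hi => ?_⟩
    rw [iter_stable hu hi]
  show dite _ _ _ = _
  rw [dif_pos hex]
  obtain ⟨N, hN⟩ := hex.choose_spec
  have h1 := hN (max N n) (le_max_left _ _)
  rw [iter_stable hu (le_max_right N n)] at h1
  exact h1.symm

/-! ### The unification lemma -/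

/-- Variables of a system of pairs. -/
noncomputable def pvs (P : List (HTerm Sg × HTerm Sg)) : Finset ℕ :=
  P.foldr (fun pr s => fvs pr.1 ∪ fvs pr.2 ∪ s) ∅

lemma mem_pvs {a : ℕ} : ∀ {P : List (HTerm Sg × HTerm Sg)},
    a ∈ pvs P ↔ ∃ pr ∈ P, a ∈ fvs pr.1 ∨ a ∈ fvs pr.2
  | [] => by simp [pvs]
  | pr :: Q => by
      simp only [pvs, List.foldr_cons, Finset.mem_union, List.mem_cons]
      rw [show Q.foldr (fun pr s => fvs pr.1 ∪ fvs pr.2 ∪ s) ∅ = pvs Q from rfl,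
        mem_pvs]
      constructor
      · rintro ((h | h) | ⟨pr', h1, h2⟩)
        · exact ⟨pr, Or.inl rfl, Or.inl h⟩
        · exact ⟨pr, Or.inl rfl, Or.inr h⟩
        · exact ⟨pr', Or.inr h1, h2⟩
      · rintro ⟨pr', (rfl | h1), h2⟩
        · rcases h2 with h2 | h2
          · exact Or.inl (Or.inl h2)
          · exact Or.inl (Or.inr h2)
        · exact Or.inr ⟨pr', h1, h2⟩

/-- Total size of a system of pairs. -/
def psz (P : List (HTerm Sg × HTerm Sg)) : ℕ :=
  (P.map (fun pr => sizT pr.1 + sizT pr.2)).sum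

lemma psz_cons (s t : HTerm Sg) (Q : List (HTerm Sg × HTerm Sg)) :
    psz ((s, t) :: Q) = sizT s + sizT t + psz Q := by
  simp [psz]

lemma psz_append (P Q : List (HTerm Sg × HTerm Sg)) :
    psz (P ++ Q) = psz P + psz Q := by
  simp [psz]

lemma mem_fvs_child {f : Sg.Sym} {ts : Fin (Sg.arity f) → HTerm Sg}
    {i : Fin (Sg.arity f)} {a : ℕ} (h : a ∈ fvs (ts i)) :
    a ∈ fvs (HTerm.app f ts) := by
  rw [mem_fvs] at h ⊢
  simp only [HTerm.varsIn, Set.mem_iUnion]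
  exact ⟨i, h⟩

/-- Single-variable substitution. -/
def sing (y : ℕ) (s : HTerm Sg) : ℕ → HTerm Sg :=
  fun a => if a = y then s else HTerm.var a

lemma fvs_substRaw_sing {y : ℕ} {s u : HTerm Sg} {a : ℕ}
    (h : a ∈ fvs (u.substRaw (sing y s))) :
    (a ∈ fvs u ∧ a ≠ y) ∨ a ∈ fvs s := by
  rw [mem_fvs, varsIn_substRaw] at h
  simp only [Set.mem_iUnion] at h
  obtain ⟨b, hb, hab⟩ := h
  by_cases hby : b = y
  · subst hby
    right
    rw [mem_fvs]
    simpa [sing] using hab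
  · left
    have : (sing y s b).varsIn = {b} := by simp [sing, hby, HTerm.varsIn]
    rw [this] at hab
    rcases hab with rfl
    exact ⟨mem_fvs.2 hb, hby⟩

lemma substRaw_cancel_sing {y : ℕ} {s : HTerm Sg} (v' : ℕ → HTerm Sg)
    (u : HTerm Sg) :
    (u.substRaw (sing y s)).substRaw v'
      = u.substRaw (fun a => if a = y then s.substRaw v' else v' a) := by
  rw [substRaw_substRaw]
  apply substRaw_congr
  intro z _
  by_cases hz : z = y <;> simp [sing, hz, HTerm.substRaw]

/-- The main unification lemma: a system of pairs, with linear left-hand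
sides mutually variable-disjoint and variable-disjoint from all right-hand
sides, that is solvable in a model, has a syntactic unifier consistent
with the solution. -/
lemma crux (A : RTModel Sg) (w : ℕ → A.struc.carrier) :
    ∀ (k m : ℕ) (P : List (HTerm Sg × HTerm Sg)),
    (pvs P).card ≤ k → psz P ≤ m →
    (∀ pr ∈ P, treeLinear (Sg := Sg) pr.1.labelAt) →
    (∀ pr ∈ P, ∀ pr' ∈ P, ∀ a, a ∈ fvs pr.1 → a ∈ fvs pr'.2 → False) →
    (List.Pairwise (fun pr pr' => ∀ a, a ∈ fvs pr.1 → a ∈ fvs pr'.1 → False) P) →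
    (∀ pr ∈ P, pr.1.eval A.struc w = pr.2.eval A.struc w) →
    ∃ v : ℕ → HTerm Sg, (∀ a, (v a).eval A.struc w = w a) ∧
      ∀ pr ∈ P, pr.1.substRaw v = pr.2.substRaw v := by
  intro k
  induction k using Nat.strong_induction_on with
  | _ k ihk =>
  intro m
  induction m using Nat.strong_induction_on with
  | _ m ihm =>
  intro P hk hm hl hd1 hd2 hw
  cases P with
  | nil => exact ⟨HTerm.var, fun a => rfl, by simp⟩
  | cons pr0 Q => ?_
  obtain ⟨s, t⟩ := pr0
  have hheadP : (s, t) ∈ (s, t) :: Q := List.mem_cons_self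
  have hmemQ : ∀ pr ∈ Q, pr ∈ (s, t) :: Q := fun pr h => List.mem_cons_of_mem _ h
  rcases List.pairwise_cons.1 hd2 with ⟨hd2head, hd2Q⟩
  have hpvsQ : pvs Q ⊆ pvs ((s, t) :: Q) := by
    intro a ha
    rw [mem_pvs] at ha ⊢
    obtain ⟨pr, h1, h2⟩ := ha
    exact ⟨pr, hmemQ pr h1, h2⟩
  cases s with
  | var z =>
      have hzt : z ∉ fvs t := fun h =>
        hd1 (HTerm.var z, t) hheadP (HTerm.var z, t) hheadP z (by simp [fvs]) h
      have hzQ1 : ∀ pr ∈ Q, z ∉ fvs pr.1 := fun pr h hz =>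
        hd2head pr h z (by simp [fvs]) hz
      have hzQ2 : ∀ pr ∈ Q, z ∉ fvs pr.2 := fun pr h hz =>
        hd1 (HTerm.var z, t) hheadP pr (hmemQ pr h) z (by simp [fvs]) hz
      have hszQ : psz Q < m := by
        have h0 := psz_cons (HTerm.var z) t Q
        have h1 := sizT_pos (HTerm.var z : HTerm Sg)
        have h2 := sizT_pos t
        omega
      obtain ⟨v', hcons', hunif'⟩ :=
        ihm (psz Q) hszQ Q ((Finset.card_le_card hpvsQ).trans hk) le_rfl
          (fun pr h => hl pr (hmemQ pr h))
          (fun pr h pr' h' => hd1 pr (hmemQ pr h) pr' (hmemQ pr' h'))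
          hd2Q (fun pr h => hw pr (hmemQ pr h))
      set v : ℕ → HTerm Sg := fun a => if a = z then t.substRaw v' else v' a with hv
      have hvagree : ∀ u : HTerm Sg, z ∉ fvs u → u.substRaw v = u.substRaw v' := by
        intro u hu
        apply substRaw_congr
        intro b hb
        have hbz : b ≠ z := fun h => hu (h ▸ mem_fvs.2 hb)
        simp [hv, hbz]
      have hconsv : ∀ a, (v a).eval A.struc w = w a := by
        intro a
        by_cases ha : a = z
        · subst ha
          simp only [hv, if_pos rfl]
          rw [eval_substRaw]
          have : (fun b => (v' b).eval A.struc w) = w := funext hcons'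
          rw [this]
          exact (hw (HTerm.var a, t) hheadP).symm
        · simp only [hv, if_neg ha]
          exact hcons' a
      refine ⟨v, hconsv, ?_⟩
      rintro pr hpr
      rcases List.mem_cons.1 hpr with heq | hpr'
      · rw [heq] -- ⊢ head
        show (HTerm.var z).substRaw v = t.substRaw v
        rw [hvagree t hzt]
        show v z = t.substRaw v'
        simp [hv]
      · rw [hvagree pr.1 (hzQ1 pr hpr'), hvagree pr.2 (hzQ2 pr hpr')]
        exact hunif' pr hpr'
  | app f ss =>
      cases t with
      | var y =>
          have hys : y ∉ fvs (HTerm.app f ss) := fun h =>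
            hd1 (HTerm.app f ss, HTerm.var y) hheadP (HTerm.app f ss, HTerm.var y)
              hheadP y h (by simp [fvs])
          have hyQ1 : ∀ pr ∈ Q, y ∉ fvs pr.1 := fun pr h hy =>
            hd1 pr (hmemQ pr h) (HTerm.app f ss, HTerm.var y) hheadP y hy
              (by simp [fvs])
          set sg : ℕ → HTerm Sg := sing y (HTerm.app f ss) with hsg
          set P' : List (HTerm Sg × HTerm Sg) :=
            Q.map (fun pr => (pr.1, pr.2.substRaw sg)) with hP'
          have hmemP' : ∀ pr' ∈ P', ∃ pr ∈ Q, pr' = (pr.1, pr.2.substRaw sg) := by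
            intro pr' h
        
            obtain ⟨pr, h1, h2⟩ := List.mem_map.1 h
            exact ⟨pr, h1, h2.symm⟩
          have hpvs' : pvs P' ⊆ pvs ((HTerm.app f ss, HTerm.var y) :: Q) := by
            intro a ha
            rw [mem_pvs] at ha
            obtain ⟨pr', h1, h2⟩ := ha
            obtain ⟨pr, hprQ, rfl⟩ := hmemP' pr' h1
            rw [mem_pvs]
            rcases h2 with h2 | h2
            · exact ⟨pr, hmemQ pr hprQ, Or.inl h2⟩
            · rcases fvs_substRaw_sing h2 with ⟨h3, _⟩ | h3
              · exact ⟨pr, hmemQ pr hprQ, Or.inr h3⟩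
              · exact ⟨(HTerm.app f ss, HTerm.var y), hheadP, Or.inl h3⟩
          have hynotP' : y ∉ pvs P' := by
            intro hy
            rw [mem_pvs] at hy
            obtain ⟨pr', h1, h2⟩ := hy
            obtain ⟨pr, hprQ, rfl⟩ := hmemP' pr' h1
            rcases h2 with h2 | h2
            · exact hyQ1 pr hprQ h2
            · rcases fvs_substRaw_sing h2 with ⟨_, h3⟩ | h3
              · exact h3 rfl
              · exact hys h3
          have hyP : y ∈ pvs ((HTerm.app f ss, HTerm.var y) :: Q) :=
            mem_pvs.2 ⟨_, hheadP, Or.inr (by simp [fvs])⟩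
          have hcard : (pvs P').card < k := by
            have h1 : pvs P' ⊂ pvs ((HTerm.app f ss, HTerm.var y) :: Q) :=
              ⟨hpvs', fun hsub => hynotP' (hsub hyP)⟩
            exact lt_of_lt_of_le (Finset.card_lt_card h1) hk
          have hevalsg : (fun b => (sg b).eval A.struc w) = w := by
            funext b
            by_cases hb : b = y
            · subst hb
              simp only [hsg, sing, if_pos rfl]
              exact hw (HTerm.app f ss, HTerm.var b) hheadP
            · simp [hsg, sing, hb, HTerm.eval]
          obtain ⟨v', hcons', hunif'⟩ :=
            ihk (pvs P').card hcard (psz P') P' le_rfl le_rfl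
              (by
                intro pr' h
                obtain ⟨pr, hprQ, rfl⟩ := hmemP' pr' h
                exact hl pr (hmemQ pr hprQ))
              (by
                intro pr1 h1 pr2 h2 a ha1 ha2
                obtain ⟨pr1', hq1, rfl⟩ := hmemP' pr1 h1
                obtain ⟨pr2', hq2, rfl⟩ := hmemP' pr2 h2
                rcases fvs_substRaw_sing ha2 with ⟨h3, _⟩ | h3
                · exact hd1 pr1' (hmemQ pr1' hq1) pr2' (hmemQ pr2' hq2) a ha1 h3
                · exact hd2head pr1' hq1 a h3 ha1)
              (by
                refine List.Pairwise.map _ ?_ hd2Q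
                intro pr1 pr2 h a ha1 ha2
                exact h a ha1 ha2)
              (by
                intro pr' h
                obtain ⟨pr, hprQ, rfl⟩ := hmemP' pr' h
                show pr.1.eval A.struc w = (pr.2.substRaw sg).eval A.struc w
                rw [eval_substRaw, hevalsg]
                exact hw pr (hmemQ pr hprQ))
          set v : ℕ → HTerm Sg :=
            fun a => if a = y then (HTerm.app f ss).substRaw v' else v' a with hv
          have hvagree : ∀ u : HTerm Sg, y ∉ fvs u → u.substRaw v = u.substRaw v' := by
            intro u hu
            apply substRaw_congr
            intro b hb
            have hby : b ≠ y := fun h => hu (h ▸ mem_fvs.2 hb)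
            simp [hv, hby]
          have hconsv : ∀ a, (v a).eval A.struc w = w a := by
            intro a
            by_cases ha : a = y
            · subst ha
              simp only [hv, if_pos rfl]
              rw [eval_substRaw]
              have : (fun b => (v' b).eval A.struc w) = w := funext hcons'
              rw [this]
              exact hw (HTerm.app f ss, HTerm.var a) hheadP
            · simp only [hv, if_neg ha]
              exact hcons' a
          refine ⟨v, hconsv, ?_⟩
          rintro pr hpr
          rcases List.mem_cons.1 hpr with heq | hpr'
          · rw [heq]
            show (HTerm.app f ss).substRaw v = (HTerm.var y).substRaw v
            rw [hvagree _ hys]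
            show (HTerm.app f ss).substRaw v' = v y
            simp [hv]
          · have hyp2 : pr.2.substRaw v = (pr.2.substRaw sg).substRaw v' := by
              rw [hsg, substRaw_cancel_sing]
              all_goals
                exact substRaw_congr fun b _ => by
                  by_cases hb : b = y <;> simp [hv, hb]
            rw [hvagree pr.1 (hyQ1 pr hpr'), hyp2]
            exact hunif' (pr.1, pr.2.substRaw sg)
              (List.mem_map.2 ⟨pr, hpr', rfl⟩)
      | app g tt =>
          -- same root symbol
          have hfg : f = g := by
            by_contra hne
            exact A.distinct f g (fun i => (ss i).eval A.struc w)
              (fun i => (tt i).eval A.struc w) hne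
              (hw (HTerm.app f ss, HTerm.app g tt) hheadP)
          subst hfg
          have hchild : ∀ i, (ss i).eval A.struc w = (tt i).eval A.struc w := by
            have := A.inj f (fun i => (ss i).eval A.struc w)
              (fun i => (tt i).eval A.struc w)
              (hw (HTerm.app f ss, HTerm.app f tt) hheadP)
            exact fun i => congrFun this i
          set C : List (HTerm Sg × HTerm Sg) :=
            (List.finRange (Sg.arity f)).map (fun i => (ss i, tt i)) with hC
          have hmemC : ∀ pr ∈ C, ∃ i, pr = (ss i, tt i) := by
            intro pr h
            obtain ⟨i, _, h2⟩ := List.mem_map.1 h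
            exact ⟨i, h2.symm⟩
          have hCmem : ∀ i, (ss i, tt i) ∈ C := fun i =>
            List.mem_map.2 ⟨i, List.mem_finRange i, rfl⟩
          set P' := C ++ Q with hP'
          have hmemP' : ∀ pr ∈ P', (∃ i, pr = (ss i, tt i)) ∨ pr ∈ Q := by
            intro pr h
            rcases List.mem_append.1 h with h | h
            · exact Or.inl (hmemC pr h)
            · exact Or.inr h
          have hfvs1 : ∀ (i : Fin (Sg.arity f)) {a : ℕ}, a ∈ fvs (ss i) →
              a ∈ fvs (HTerm.app f ss) := fun i {a} h => mem_fvs_child h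
          have hfvs2 : ∀ (i : Fin (Sg.arity f)) {a : ℕ}, a ∈ fvs (tt i) →
              a ∈ fvs (HTerm.app f tt) := fun i {a} h => mem_fvs_child h
          have hpvs' : pvs P' ⊆ pvs ((HTerm.app f ss, HTerm.app f tt) :: Q) := by
            intro a ha
            rw [mem_pvs] at ha
            obtain ⟨pr, h1, h2⟩ := ha
            rcases hmemP' pr h1 with ⟨i, rfl⟩ | h1'
            · rcases h2 with h2 | h2
              · exact mem_pvs.2 ⟨_, hheadP, Or.inl (hfvs1 i h2)⟩
              · exact mem_pvs.2 ⟨_, hheadP, Or.inr (hfvs2 i h2)⟩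
            · exact mem_pvs.2 ⟨pr, hmemQ pr h1', h2⟩
          have hszC : psz C + 2 ≤ sizT (HTerm.app f ss) + sizT (HTerm.app f tt) := by
            have h1 : psz C = ∑ i, (sizT (ss i) + sizT (tt i)) := by
              rw [hC, psz, List.map_map]
              rw [Fin.sum_univ_def]
              rfl
            have h2 : sizT (HTerm.app f ss) = 1 + ∑ i, sizT (ss i) := rfl
            have h3 : sizT (HTerm.app f tt) = 1 + ∑ i, sizT (tt i) := rfl
            rw [h1, h2, h3, Finset.sum_add_distrib]
            omega
          have hszP' : psz P' < m := by
            rw [hP']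
            have h1 := psz_append C Q
            have h2 := psz_cons (HTerm.app f ss) (HTerm.app f tt) Q
            omega
          obtain ⟨v', hcons', hunif'⟩ :=
            ihm (psz P') hszP' P' ((Finset.card_le_card hpvs').trans hk) le_rfl
              (by
                intro pr h
                rcases hmemP' pr h with ⟨i, rfl⟩ | h'
                · exact treeLinear_child (hl _ hheadP) i
                · exact hl pr (hmemQ pr h'))
              (by
                intro pr1 h1 pr2 h2 a ha1 ha2
                have ha1' : a ∈ fvs (HTerm.app f ss) ∨ (pr1 ∈ Q ∧ a ∈ fvs pr1.1) := by
                  rcases hmemP' pr1 h1 with ⟨i, rfl⟩ | h'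
                  · exact Or.inl (hfvs1 i ha1)
                  · exact Or.inr ⟨h', ha1⟩
                have ha2' : a ∈ fvs (HTerm.app f tt) ∨ (pr2 ∈ Q ∧ a ∈ fvs pr2.2) := by
                  rcases hmemP' pr2 h2 with ⟨i, rfl⟩ | h'
                  · exact Or.inl (hfvs2 i ha2)
                  · exact Or.inr ⟨h', ha2⟩
                rcases ha1' with ha1' | ⟨hq1, ha1'⟩ <;>
                  rcases ha2' with ha2' | ⟨hq2, ha2'⟩
                · exact hd1 _ hheadP _ hheadP a ha1' ha2'
                · exact hd1 _ hheadP _ (hmemQ _ hq2) a ha1' ha2'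
                · exact hd1 _ (hmemQ _ hq1) _ hheadP a ha1' ha2'
                · exact hd1 _ (hmemQ _ hq1) _ (hmemQ _ hq2) a ha1' ha2')
              (by
                rw [hP', List.pairwise_append]
                refine ⟨?_, hd2Q, ?_⟩
                · rw [hC]
                  refine List.Pairwise.map _ ?_ (List.pairwise_lt_finRange _)
                  intro i j hij a ha1 ha2
                  exact treeLinear_child_disjoint (hl _ hheadP) (Fin.ne_of_lt hij)
                    (mem_fvs.1 ha1) (mem_fvs.1 ha2)
                · intro pr1 h1 pr2 h2 a ha1 ha2
                  obtain ⟨i, rfl⟩ := hmemC pr1 h1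
                  exact hd2head pr2 h2 a (hfvs1 i ha1) ha2)
              (by
                intro pr h
                rcases hmemP' pr h with ⟨i, rfl⟩ | h'
                · exact hchild i
                · exact hw pr (hmemQ pr h'))
          refine ⟨v', hcons', ?_⟩
          rintro pr hpr
          rcases List.mem_cons.1 hpr with heq | hpr'
          · rw [heq]
            show (HTerm.app f ss).substRaw v' = (HTerm.app f tt).substRaw v'
            show HTerm.app f (fun i => (ss i).substRaw v')
              = HTerm.app f (fun i => (tt i).substRaw v')
            congr 1
            funext i
            exact hunif' (ss i, tt i) (List.mem_append.2 (Or.inl (hCmem i)))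
          · exact hunif' pr (List.mem_append.2 (Or.inr hpr'))

/-! ### Variables not in `hvars` have infinite trees in any solution -/

lemma eval_subtree {w : ℕ → (treeStruc Sg).carrier} {z' : ℕ} :
    ∀ {u : HTerm Sg}, z' ∈ u.varsIn →
      ∃ q, ∀ p, u.eval (treeStruc Sg) w (q ++ p) = w z' p
  | .var z, h => by
      have : z' = z := by simpa [HTerm.varsIn] using h
      subst this
      exact ⟨[], fun p => rfl⟩
  | .app f ts, h => by
      obtain ⟨i, hi⟩ := Set.mem_iUnion.1 h
      obtain ⟨q', hq'⟩ := eval_subtree hi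
      refine ⟨↑i :: q', fun p => ?_⟩
      rw [show (↑i :: q') ++ p = ↑i :: (q' ++ p) from rfl, eval_treeStruc_cons]
      exact hq' p

lemma step_not_hvars {τ : Subst Sg} (hτ : τ.InRSF)
    {w : ℕ → (treeStruc Sg).carrier} (hsat : (treeStruc Sg).Sat w τ.eqs) :
    ∀ z, z ∉ τ.hvars →
      ∃ z', z' ∉ τ.hvars ∧ ∃ q : List ℕ, q ≠ [] ∧ ∀ p, w z (q ++ p) = w z' p := by
  suffices h : ∀ (N : ℕ) (z), rank τ z ≤ N → z ∉ τ.hvars →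
      ∃ z', z' ∉ τ.hvars ∧ ∃ q : List ℕ, q ≠ [] ∧ ∀ p, w z (q ++ p) = w z' p by
    intro z hz
    exact h (rank τ z) z le_rfl hz
  intro N
  induction N using Nat.strong_induction_on with
  | _ N ih =>
  intro z hN hz
  have hzdom : z ∈ τ.dom := by
    by_contra hzd
    exact hz (mem_hvars.2 ⟨0, hzd⟩)
  have hwz : w z = (τ.map z).eval (treeStruc Sg) w :=
    hsat (HTerm.var z, τ.map z) ⟨z, hzdom, rfl⟩
  cases hmz : τ.map z with
  | var z₂ =>
      have hz₂ : z₂ ∉ τ.hvars := by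
        intro h
        refine hz (mem_hvars_of_map hzdom ?_)
        rw [hmz]
        intro a ha
        have : a = z₂ := by simpa [HTerm.varsIn] using ha
        rwa [this]
      have hrk : rank τ z₂ < rank τ z := rank_lt hτ ⟨hzdom, hmz⟩
      rcases Nat.exists_eq_succ_of_ne_zero (show N ≠ 0 by omega) with ⟨M, rfl⟩
      obtain ⟨z', hz', q, hq0, hq⟩ := ih M (Nat.lt_succ_self M) z₂ (by omega) hz₂
      refine ⟨z', hz', q, hq0, fun p => ?_⟩
      rw [hwz, hmz]
      exact hq p
  | app f ts =>
      have hex : ∃ z', z' ∈ (τ.map z).varsIn ∧ z' ∉ τ.hvars := by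
        by_contra hco
        push_neg at hco
        exact hz (mem_hvars_of_map hzdom fun a ha => hco a ha)
      obtain ⟨z', hz'mem, hz'⟩ := hex
      rw [hmz] at hz'mem
      obtain ⟨i, hi⟩ := Set.mem_iUnion.1 hz'mem
      obtain ⟨q', hq'⟩ := eval_subtree (w := w) hi
      refine ⟨z', hz', ↑i :: q', by simp, fun p => ?_⟩
      rw [hwz, hmz, show (↑i :: q') ++ p = ↑i :: (q' ++ p) from rfl,
        eval_treeStruc_cons]
      exact hq' p

lemma deep_not_hvars {τ : Subst Sg} (hτ : τ.InRSF)
    {w : ℕ → (treeStruc Sg).carrier} (hsat : (treeStruc Sg).Sat w τ.eqs)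
    {y : ℕ} (hy : y ∉ τ.hvars) :
    ∀ n : ℕ, ∃ z', z' ∉ τ.hvars ∧ ∃ q : List ℕ, n ≤ q.length ∧
      ∀ p, w y (q ++ p) = w z' p := by
  intro n
  induction n with
  | zero => exact ⟨y, hy, [], Nat.zero_le _, fun p => rfl⟩
  | succ n ihn =>
      obtain ⟨z', hz', q, hlen, hq⟩ := ihn
      obtain ⟨z'', hz'', q₂, hq₂0, hq₂⟩ := step_not_hvars hτ hsat z' hz'
      refine ⟨z'', hz'', q ++ q₂, ?_, fun p => ?_⟩
      · have : q₂.length ≠ 0 := fun h => hq₂0 (List.length_eq_zero_iff.1 h)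
        rw [List.length_append]
        omega
      · rw [List.append_assoc, hq, hq₂]

lemma root_isSome {σ : Subst Sg} (hσ : σ.InRSF)
    {w : ℕ → (treeStruc Sg).carrier} (hsat : (treeStruc Sg).Sat w σ.eqs)
    (hbase : ∀ z ∉ σ.dom, (w z []).isSome) :
    ∀ u : HTerm Sg, ((u.eval (treeStruc Sg) w) []).isSome := by
  suffices h : ∀ (N : ℕ) (u : HTerm Sg), rankT σ u ≤ N →
      ((u.eval (treeStruc Sg) w) []).isSome by
    intro u
    exact h (rankT σ u) u le_rfl
  intro N
  induction N using Nat.strong_induction_on with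
  | _ N ih =>
  intro u hN
  cases u with
  | var z =>
      by_cases hz : z ∈ σ.dom
      · have hwz : w z = (σ.map z).eval (treeStruc Sg) w :=
          hsat (HTerm.var z, σ.map z) ⟨z, hz, rfl⟩
        show ((w z) []).isSome
        rw [hwz]
        have hlt := rankT_map_lt hσ hz
        rcases Nat.exists_eq_succ_of_ne_zero (show N ≠ 0 by omega) with ⟨M, rfl⟩
        exact ih M (Nat.lt_succ_self M) (σ.map z) (by omega)
      · exact hbase z hz
  | app f ts =>
      rw [eval_treeStruc_nil]
      rfl

lemma not_treeFinite_of_unbounded {u : List ℕ → Option (Sg.Sym ⊕ ℕ)}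
    (h : ∀ n : ℕ, ∃ p, n ≤ p.length ∧ (u p).isSome) :
    ¬ treeFinite (Sg := Sg) u := by
  intro hfin
  obtain ⟨M, hM⟩ := (hfin.image List.length).bddAbove
  obtain ⟨p, hp1, hp2⟩ := h (M + 1)
  have : p.length ≤ M := hM ⟨p, hp2, rfl⟩
  omega

/-- Claim B : if `y ∉ hvars τ` then in any solution of `τ` whose values all
have nonempty roots, the value of `y` is an infinite tree. -/
lemma not_hvars_infinite {τ : Subst Sg} (hτ : τ.InRSF)
    {w : ℕ → (treeStruc Sg).carrier} (hsat : (treeStruc Sg).Sat w τ.eqs)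
    (hroot : ∀ z, ((w z) []).isSome) {y : ℕ} (hy : y ∉ τ.hvars) :
    ¬ treeFinite (Sg := Sg) (w y) := by
  apply not_treeFinite_of_unbounded
  intro n
  obtain ⟨z', _, q, hlen, hq⟩ := deep_not_hvars hτ hsat hy n
  refine ⟨q, hlen, ?_⟩
  have := hq []
  rw [List.append_nil] at this
  rw [this]
  exact hroot z'

end AMGU


/-- If `σ ∈ VSubst`, `x ∈ hvars(σ)`, `vars(t) ⊆ hvars(σ)`,
`rt(x, σ)` and `rt(t, σ)` have no common variable and one of them is linear,
then for every `τ ∈ mgs(σ ∪ {x = t})`: `hvars(σ) ⊆ hvars(τ)`. -/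
theorem amgu_independent_orlinear_case
    (Sg : Signature) (hconst : ∃ f, Sg.arity f = 0) (hposar : ∃ f, 0 < Sg.arity f)
    (σ : Subst Sg) (hσ : σ.IsVSubst)
    (x : ℕ) (t : HTerm Sg) (hbind : t ≠ HTerm.var x)
    (hxh : x ∈ σ.hvars) (hth : t.varsIn ⊆ σ.hvars)
    (hind : treeVars (σ.rt (HTerm.var x)) ∩ treeVars (σ.rt t) = ∅)
    (hlin : treeLinear (σ.rt (HTerm.var x)) ∨ treeLinear (σ.rt t)) :
    ∀ τ ∈ mgsRT (σ.eqs ∪ {(HTerm.var x, t)}), σ.hvars ⊆ τ.hvars := by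
  intro τ hτ y hy
  obtain ⟨hτrsf, hequiv, _⟩ := hτ
  by_contra hyτ
  have hσrsf := hσ.1
  -- a stabilization level for x, t and y
  have hvfin : (({x} : Set ℕ) ∪ t.varsIn ∪ {y}).Finite :=
    (((Set.finite_singleton x).union (AMGU.varsIn_finite t)).union
      (Set.finite_singleton y))
  have hsub : (({x} : Set ℕ) ∪ t.varsIn ∪ {y}) ⊆ σ.hvars := by
    rintro a ((ha | ha) | ha)
    · rwa [Set.mem_singleton_iff.1 ha]
    · exact hth ha
    · rwa [Set.mem_singleton_iff.1 ha]
  obtain ⟨N, hN⟩ := AMGU.finite_subset_hvarsN hvfin hsub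
  have hNx : (HTerm.var x : HTerm Sg).varsIn ⊆ σ.hvarsN N := by
    intro a ha
    have : a = x := by simpa [HTerm.varsIn] using ha
    exact hN (by rw [this]; exact Or.inl (Or.inl rfl))
  have hNt : t.varsIn ⊆ σ.hvarsN N := fun a ha => hN (Or.inl (Or.inr ha))
  have hNy : (HTerm.var y : HTerm Sg).varsIn ⊆ σ.hvarsN N := by
    intro a ha
    have : a = y := by simpa [HTerm.varsIn] using ha
    exact hN (by rw [this]; exact Or.inr rfl)
  set u₁ : HTerm Sg := σ.iter N (HTerm.var x) with hu₁
  set u₂ : HTerm Sg := σ.iter N t with hu₂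
  set uy : HTerm Sg := σ.iter N (HTerm.var y) with huy
  have hrt1 : σ.rt (HTerm.var x) = u₁.labelAt := AMGU.rt_eq_labelAt hNx
  have hrt2 : σ.rt t = u₂.labelAt := AMGU.rt_eq_labelAt hNt
  have hdisj : ∀ a, a ∈ u₁.varsIn → a ∈ u₂.varsIn → False := by
    intro a h1 h2
    have : a ∈ treeVars (σ.rt (HTerm.var x)) ∩ treeVars (σ.rt t) := by
      rw [hrt1, hrt2, AMGU.treeVars_labelAt, AMGU.treeVars_labelAt]
      exact ⟨h1, h2⟩
    rw [hind] at this
    exact this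
  -- the tree model and a solution of τ
  set R := AMGU.treeModel Sg with hR
  obtain ⟨w₀, ⟨hw₀off, hw₀sat⟩, -⟩ :=
    R.uniqueness τ hτrsf (fun z => (HTerm.var z : HTerm Sg).labelAt)
  have hw₀E : R.struc.Sat w₀ (σ.eqs ∪ {(HTerm.var x, t)}) := (hequiv R w₀).1 hw₀sat
  have hw₀σ : R.struc.Sat w₀ σ.eqs := fun e he => hw₀E e (Or.inl he)
  have hw₀xt : (HTerm.var x).eval R.struc w₀ = t.eval R.struc w₀ :=
    hw₀E (HTerm.var x, t) (Or.inr rfl)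
  have hu12 : u₁.eval R.struc w₀ = u₂.eval R.struc w₀ := by
    rw [hu₁, hu₂, AMGU.eval_iter_of_sat hw₀σ, AMGU.eval_iter_of_sat hw₀σ, hw₀xt]
  -- a finite unifier of u₁ and u₂
  have hlin' : treeLinear (Sg := Sg) u₁.labelAt ∨ treeLinear (Sg := Sg) u₂.labelAt := by
    rwa [hrt1, hrt2] at hlin
  obtain ⟨v, hvcons, hvunif⟩ : ∃ v : ℕ → HTerm Sg,
      (∀ a, (v a).eval R.struc w₀ = w₀ a) ∧ u₁.substRaw v = u₂.substRaw v := by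
    rcases hlin' with h | h
    · obtain ⟨v, hc, hu⟩ := AMGU.crux R w₀ (AMGU.pvs [(u₁, u₂)]).card
        (AMGU.psz [(u₁, u₂)]) [(u₁, u₂)] le_rfl le_rfl
        (by rintro pr hpr; rcases List.mem_singleton.1 hpr with rfl; exact h)
        (by
          rintro pr hpr pr' hpr' a ha1 ha2
          rcases List.mem_singleton.1 hpr with rfl
          rcases List.mem_singleton.1 hpr' with rfl
          exact hdisj a (AMGU.mem_fvs.1 ha1) (AMGU.mem_fvs.1 ha2))
        (by simp)
        (by rintro pr hpr; rcases List.mem_singleton.1 hpr with rfl; exact hu12)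
      exact ⟨v, hc, hu (u₁, u₂) (List.mem_singleton.2 rfl)⟩
    · obtain ⟨v, hc, hu⟩ := AMGU.crux R w₀ (AMGU.pvs [(u₂, u₁)]).card
        (AMGU.psz [(u₂, u₁)]) [(u₂, u₁)] le_rfl le_rfl
        (by rintro pr hpr; rcases List.mem_singleton.1 hpr with rfl; exact h)
        (by
          rintro pr hpr pr' hpr' a ha1 ha2
          rcases List.mem_singleton.1 hpr with rfl
          rcases List.mem_singleton.1 hpr' with rfl
          exact hdisj a (AMGU.mem_fvs.1 ha2) (AMGU.mem_fvs.1 ha1))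
        (by simp)
        (by rintro pr hpr; rcases List.mem_singleton.1 hpr with rfl; exact hu12.symm)
      exact ⟨v, hc, (hu (u₂, u₁) (List.mem_singleton.2 rfl)).symm⟩
  -- the solution of σ over the finite base values given by the unifier
  obtain ⟨wσ, ⟨hwσoff, hwσsat⟩, -⟩ :=
    R.uniqueness σ hσrsf (fun z => (v z).labelAt)
  have hkey : ∀ (u w : HTerm Sg), w.varsIn ⊆ σ.hvarsN N → u = σ.iter N w →
      w.eval R.struc wσ = (u.substRaw v).labelAt := by
    intro u w hwN hiter
    have h1 : w.eval R.struc wσ = u.eval R.struc wσ := by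
      rw [hiter, AMGU.eval_iter_of_sat hwσsat]
    have h2 : u.eval R.struc wσ = u.eval R.struc (fun z => (v z).labelAt) := by
      apply AMGU.eval_congr
      intro z hz
      refine hwσoff z ?_
      have := AMGU.iter_varsIn_nondom hwN
      rw [← hiter] at this
      exact this z hz
    rw [h1, h2]
    exact AMGU.eval_treeStruc_labelAt v u
  have hwσE : R.struc.Sat wσ (σ.eqs ∪ {(HTerm.var x, t)}) := by
    rintro e (he | he)
    · exact hwσsat e he
    · rw [Set.mem_singleton_iff.1 he]
      show (HTerm.var x).eval R.struc wσ = t.eval R.struc wσ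
      rw [hkey u₁ (HTerm.var x) hNx hu₁, hkey u₂ t hNt hu₂, hvunif]
  have hwστ : R.struc.Sat wσ τ.eqs := (hequiv R wσ).2 hwσE
  have hroot : ∀ z, ((wσ z) []).isSome := by
    intro z
    have := AMGU.root_isSome hσrsf hwσsat
      (fun z hz => by rw [hwσoff z hz]; exact AMGU.labelAt_root_isSome (v z))
      (HTerm.var z)
    exact this
  have hfin : treeFinite (Sg := Sg) (wσ y) := by
    have h1 : wσ y = (uy.substRaw v).labelAt := hkey uy (HTerm.var y) hNy huy
    rw [h1]
    exact AMGU.treeFinite_labelAt _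
  exact AMGU.not_hvars_infinite hτrsf hwστ hroot hyτ hfin
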